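/- Let D > 0, L > 0, κ > 0 and M^L ∈ ℝ. Define ρ̄^L(x) = −(D·κ/2)·(1 + 1/L²)·cos(x) + M^L/(2π), and let f be the repulsive interaction kernel f(x) = sgn(x)/(exp(2π/L) − 1) · [exp((2π − |x|)/L) − exp(|x|/L)] on [−π, π], extended 2π-periodically. Then the circular convolution satisfies (f*ρ̄^L)(x) = ∫_{−π}^{π} f(x − y) ρ̄^L(y) dy = −D·κ·sin(x) for all x; in particular, with ρ̂(x) = exp(κ·cos x)/∫_{−π}^{π} exp(κ·cos y) dy, one has (f*ρ̄^L)(x) = D·ρ̂'(x)/ρ̂(x). -/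

import Mathlib

/-- The repulsive interaction kernel on `[-π, π]` with characteristic length `L`. -/
noncomputable def repKernel (L x : ℝ) : ℝ :=
  Real.sign x / (Real.exp (2 * Real.pi / L) - 1) *
    (Real.exp ((2 * Real.pi - |x|) / L) - Real.exp (|x| / L))

/-- Wrap a real number to the fundamental domain `[-π, π)`. -/
noncomputable def wrap (x : ℝ) : ℝ :=
  2 * Real.pi * Int.fract ((x + Real.pi) / (2 * Real.pi)) - Real.pi

/-- The 2π-periodic extension of the repulsive kernel. -/
noncomputable def perKernel (L x : ℝ) : ℝ := repKernel L (wrap x)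

/-!
The kernel is odd, so in the circular convolution with `A cos y + C` the constant and the
`cos x cos y` part of `cos (x - y)` integrate to zero, leaving `A sin x` times the sine
coefficient `∫ f(u) sin u du = 2L² / (L² + 1)`. The factor `1 + 1/L²` in `ρ̄^L` cancels
exactly this coefficient. On the other side, `ρ̂'/ρ̂` is the derivative of `κ cos x`.
-/

open Real MeasureTheory Set Function

section SymmetricIntegrals

variable {f : ℝ → ℝ}

theorem integral_comp_sub_left_of_periodic {T : ℝ} (hf : Periodic f T) (x a : ℝ) :
    ∫ y in a..a + T, f (x - y) = ∫ y in a..a + T, f y := by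
  rw [intervalIntegral.integral_comp_sub_left, ← hf.intervalIntegral_add_eq (x - (a + T)) a]
  ring_nf

theorem integral_neg_self_eq_zero_of_odd (hf : f.Odd) (a : ℝ) : ∫ x in -a..a, f x = 0 := by
  have h := intervalIntegral.integral_comp_neg (a := -a) (b := a) f
  simp only [hf _, intervalIntegral.integral_neg, neg_neg] at h
  linarith

theorem integral_neg_self_eq_two_mul_of_even (hf : f.Even) {a : ℝ}
    (hint : IntervalIntegrable f volume 0 a) : ∫ x in -a..a, f x = 2 * ∫ x in 0..a, f x := by
  have hneg : ∫ x in -a..0, f x = ∫ x in 0..a, f x := by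
    simpa [hf _] using (intervalIntegral.integral_comp_neg (a := 0) (b := a) f).symm
  have hint' : IntervalIntegrable f volume (-a) 0 := by
    simpa [hf _] using ((IntervalIntegrable.iff_comp_neg (f := f)).mp hint).symm
  rw [← intervalIntegral.integral_add_adjacent_intervals hint' hint, hneg]
  ring

end SymmetricIntegrals

theorem integral_exp_mul_mul_sin (c : ℝ) :
    ∫ u in 0..π, exp (c * u) * sin u = (1 + exp (c * π)) / (1 + c ^ 2) := by
  have hc : 1 + c ^ 2 ≠ 0 := by positivity
  have hderiv : ∀ u ∈ uIcc 0 π,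
      HasDerivAt (fun u => exp (c * u) * (c * sin u - cos u) / (1 + c ^ 2))
        (exp (c * u) * sin u) u := by
    intro u _
    have hexp : HasDerivAt (fun u => exp (c * u)) (exp (c * u) * c) u := by
      simpa using ((hasDerivAt_id u).const_mul c).exp
    have htrig : HasDerivAt (fun u => c * sin u - cos u) (c * cos u + sin u) u := by
      simpa using ((hasDerivAt_sin u).const_mul c).fun_sub (hasDerivAt_cos u)
    refine ((hexp.mul htrig).div_const _).congr_deriv ?_
    field_simp
    ring
  rw [intervalIntegral.integral_eq_sub_of_hasDerivAt hderiv
    (Continuous.intervalIntegrable (by fun_prop) 0 π)]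
  simp only [sin_pi, cos_pi, sin_zero, cos_zero, mul_zero, exp_zero]
  ring

theorem wrap_of_mem_Ico {x : ℝ} (hx : x ∈ Ico (-π) π) : wrap x = x := by
  have hfract : Int.fract ((x + π) / (2 * π)) = (x + π) / (2 * π) := by
    rw [Int.fract_eq_self, le_div_iff₀ (by positivity), div_lt_one (by positivity)]
    constructor <;> linarith [hx.1, hx.2]
  rw [wrap, hfract]
  field_simp
  ring

theorem wrap_pi : wrap π = -π := by
  have h : (π + π) / (2 * π) = 1 := by field_simp; ring
  rw [wrap, h, Int.fract_one]
  ring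

theorem wrap_add_two_pi (x : ℝ) : wrap (x + 2 * π) = wrap x := by
  have h : (x + 2 * π + π) / (2 * π) = (x + π) / (2 * π) + 1 := by field_simp; ring
  rw [wrap, wrap, h, Int.fract_add_one]

section Kernel

variable (L : ℝ)

theorem repKernel_odd : (repKernel L).Odd := fun x => by
  simp only [repKernel, Real.sign_neg, abs_neg]
  ring

theorem repKernel_pi : repKernel L π = 0 := by
  rw [repKernel, abs_of_pos pi_pos, show 2 * π - π = π by ring, sub_self, mul_zero]

theorem repKernel_eqOn_Ioi : EqOn (repKernel L)
    (fun x => (exp (2 * π / L) * exp (-L⁻¹ * x) - exp (L⁻¹ * x)) / (exp (2 * π / L) - 1))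
    (Ioi 0) := fun x hx => by
  rw [repKernel, Real.sign_of_pos hx, abs_of_pos hx, div_mul_eq_mul_div, one_mul]
  dsimp only
  rw [← exp_add]
  ring_nf

theorem perKernel_periodic : Periodic (perKernel L) (2 * π) := fun x => by
  rw [perKernel, perKernel, wrap_add_two_pi]

theorem perKernel_eq_repKernel {x : ℝ} (hx : x ∈ Icc (-π) π) :
    perKernel L x = repKernel L x := by
  rcases hx.2.lt_or_eq with hlt | rfl
  · rw [perKernel, wrap_of_mem_Ico ⟨hx.1, hlt⟩]
  · rw [perKernel, wrap_pi, repKernel_odd, repKernel_pi, neg_zero]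

theorem repKernel_intervalIntegrable (a b : ℝ) : IntervalIntegrable (repKernel L) volume a b := by
  refine intervalIntegrable_of_odd (fun x => (repKernel_odd L x).symm) (fun x hx => ?_)
  rw [intervalIntegrable_congr ((repKernel_eqOn_Ioi L).mono fun y hy => ?_)]
  · exact Continuous.intervalIntegrable (by fun_prop) 0 x
  · exact (uIoc_of_le hx.le ▸ hy).1

theorem integral_repKernel_mul_sin (hL : L ≠ 0) :
    ∫ u in -π..π, repKernel L u * sin u = 2 * (L ^ 2 / (L ^ 2 + 1)) := by
  have hint (c : ℝ) : IntervalIntegrable (fun u => exp (c * u) * sin u) volume 0 π :=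
    Continuous.intervalIntegrable (by fun_prop) 0 π
  have hhalf : ∫ u in 0..π, repKernel L u * sin u
      = (exp (2 * π / L) * ∫ u in 0..π, exp (-L⁻¹ * u) * sin u) / (exp (2 * π / L) - 1)
        - (∫ u in 0..π, exp (L⁻¹ * u) * sin u) / (exp (2 * π / L) - 1) := by
    rw [← intervalIntegral.integral_const_mul, ← intervalIntegral.integral_div,
      ← intervalIntegral.integral_div, ← intervalIntegral.integral_sub
        (((hint _).const_mul _).div_const _) ((hint _).div_const _)]
    refine intervalIntegral.integral_congr_Ioo_of_le pi_pos.le fun u hu => ?_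
    rw [repKernel_eqOn_Ioi L hu.1]
    ring
  have heven : (fun u => repKernel L u * sin u).Even := (repKernel_odd L).mul_odd sin_neg
  rw [integral_neg_self_eq_two_mul_of_even heven
      ((repKernel_intervalIntegrable L 0 π).mul_continuousOn continuous_sin.continuousOn),
    hhalf, integral_exp_mul_mul_sin, integral_exp_mul_mul_sin]
  have hsq : exp (2 * π / L) = exp (L⁻¹ * π) ^ 2 := by rw [← exp_nat_mul]; ring_nf
  have hneg : exp (-L⁻¹ * π) = (exp (L⁻¹ * π))⁻¹ := by rw [← exp_neg]; ring_nf
  have hpos : 0 < exp (L⁻¹ * π) := exp_pos _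
  have hne : exp (L⁻¹ * π) ≠ 1 := by simp [exp_eq_one_iff, hL, pi_ne_zero]
  -- with `a = exp (π / L)` the numerator is `a² (1 + a⁻¹) - (1 + a) = a² - 1`
  rw [hsq, hneg]
  generalize exp (L⁻¹ * π) = a at hpos hne
  have hsq1 : a ^ 2 - 1 ≠ 0 := by
    rw [show a ^ 2 - 1 = (a - 1) * (a + 1) by ring]
    exact mul_ne_zero (sub_ne_zero.mpr hne) (by positivity)
  field_simp
  ring

end Kernel

theorem integral_perKernel_mul_cos_add_const {L : ℝ} (hL : L ≠ 0) (A C x : ℝ) :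
    ∫ y in -π..π, perKernel L (x - y) * (A * cos y + C)
      = 2 * (L ^ 2 / (L ^ 2 + 1)) * A * sin x := by
  have hper : Periodic (fun u => perKernel L u * (A * cos (x - u) + C)) (2 * π) := fun u => by
    simp only [perKernel_periodic L u, sub_add_eq_sub_sub, cos_sub_two_pi]
  have hk := repKernel_intervalIntegrable L (-π) π
  have hodd : (fun u => repKernel L u * (A * cos x * cos u + C)).Odd :=
    (repKernel_odd L).mul_even fun u => by rw [cos_neg]
  calc ∫ y in -π..π, perKernel L (x - y) * (A * cos y + C)
      = ∫ u in -π..π, perKernel L u * (A * cos (x - u) + C) := by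
        simpa [sub_sub_cancel, show -π + 2 * π = π by ring]
          using integral_comp_sub_left_of_periodic hper x (-π)
    _ = ∫ u in -π..π, (repKernel L u * (A * cos x * cos u + C)
          + A * sin x * (repKernel L u * sin u)) := by
        refine intervalIntegral.integral_congr fun u hu => ?_
        rw [uIcc_of_le (by linarith [pi_pos])] at hu
        rw [perKernel_eq_repKernel L hu, cos_sub]
        ring
    _ = A * sin x * ∫ u in -π..π, repKernel L u * sin u := by
        rw [intervalIntegral.integral_add (hk.mul_continuousOn (by fun_prop))
          ((hk.mul_continuousOn continuous_sin.continuousOn).const_mul _),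
          integral_neg_self_eq_zero_of_odd hodd, zero_add, intervalIntegral.integral_const_mul]
    _ = 2 * (L ^ 2 / (L ^ 2 + 1)) * A * sin x := by
        rw [integral_repKernel_mul_sin L hL]
        ring

theorem logDeriv_exp_comp_div_const {g : ℝ → ℝ} {x Z : ℝ} (hg : DifferentiableAt ℝ g x)
    (hZ : Z ≠ 0) : logDeriv (fun y => exp (g y) / Z) x = deriv g x := by
  simp only [div_eq_mul_inv]
  rw [logDeriv_mul_const x _ (inv_ne_zero hZ)]
  change logDeriv (exp ∘ g) x = _
  rw [logDeriv_comp differentiableAt_exp hg, Real.logDeriv_exp, Pi.one_apply, one_mul]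

theorem vonMises_reference_density_generates_velocity_general
    (D L κ ML : ℝ) (hL : 0 < L) :
    let ρL : ℝ → ℝ := fun x =>
      -(D * κ / 2) * (1 + 1 / L ^ 2) * Real.cos x + ML / (2 * Real.pi)
    let ρhat : ℝ → ℝ := fun x =>
      Real.exp (κ * Real.cos x) / ∫ y in (-Real.pi)..Real.pi, Real.exp (κ * Real.cos y)
    (∀ x, (∫ y in (-Real.pi)..Real.pi, perKernel L (x - y) * ρL y)
        = -D * κ * Real.sin x) ∧
    (∀ x, (∫ y in (-Real.pi)..Real.pi, perKernel L (x - y) * ρL y)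
        = D * deriv ρhat x / ρhat x) := by
  intro ρL ρhat
  have hconv (x : ℝ) : ∫ y in -π..π, perKernel L (x - y) * ρL y = -D * κ * sin x := by
    rw [integral_perKernel_mul_cos_add_const hL.ne']
    field_simp
  have hZ : 0 < ∫ y in -π..π, exp (κ * cos y) :=
    intervalIntegral.intervalIntegral_pos_of_pos (Continuous.intervalIntegrable (by fun_prop) _ _)
      (fun _ => exp_pos _) (by linarith [pi_pos])
  refine ⟨hconv, fun x => ?_⟩
  have hlog : logDeriv ρhat x = -κ * sin x := by
    rw [logDeriv_exp_comp_div_const (by fun_prop) hZ.ne', ((hasDerivAt_cos x).const_mul κ).deriv]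
    ring
  rw [hconv, mul_div_assoc, ← logDeriv_apply, hlog]
  ring

/-- Equation (36) of the paper: in the von Mises example, the reference leaders'
density `ρ̄^L(x) = -(Dκ/2)(1 + 1/L²)cos x + M^L/(2π)` generates through the
repulsive kernel exactly the desired followers' velocity field
`v̄^{FL}(x) = -Dκ sin x = D ρ̂'(x)/ρ̂(x)`. -/
theorem vonMises_reference_density_generates_velocity
    (D L κ ML : ℝ) (hD : 0 < D) (hL : 0 < L) (hκ : 0 < κ) :
    let ρL : ℝ → ℝ := fun x =>
      -(D * κ / 2) * (1 + 1 / L ^ 2) * Real.cos x + ML / (2 * Real.pi)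
    let ρhat : ℝ → ℝ := fun x =>
      Real.exp (κ * Real.cos x) / ∫ y in (-Real.pi)..Real.pi, Real.exp (κ * Real.cos y)
    (∀ x, (∫ y in (-Real.pi)..Real.pi, perKernel L (x - y) * ρL y)
        = -D * κ * Real.sin x) ∧
    (∀ x, (∫ y in (-Real.pi)..Real.pi, perKernel L (x - y) * ρL y)
        = D * deriv ρhat x / ρhat x) :=
  vonMises_reference_density_generates_velocity_general D L κ ML hL
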